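/- arXiv:2111.03968 — 2 statements merged into one kernel-verified Lean document; each statement's English description precedes it below -/
import Mathlib

section
/- If a string s has periodicity a with a ≤ |s|/2, then a is an integer multiple of period(s), where period(s) is the smallest periodicity of s. -/
/-- A string `s` has periodicity `p` if `s[i] = s[i+p]` for all valid indices. -/
def hasPeriod {α : Type*} (s : List α) (p : ℕ) : Prop :=
  ∀ i, i + p < s.length → s[i]? = s[i + p]?

/-- `periodN s` is the smallest positive periodicity of `s`
(this equals `|pref(s,s)|`, the prefix obtained by maximally self-overlapping `s`). -/
noncomputable def periodN {α : Type*} (s : List α) : ℕ :=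
  sInf {p | 0 < p ∧ hasPeriod s p}

lemma hasPeriod_sub {α : Type*} (s : List α) {p a : ℕ} (hp : hasPeriod s p)
    (ha : hasPeriod s a) (hpa : p ≤ a) (hlen : p + a ≤ s.length) :
    hasPeriod s (a - p) := by
  intro i hi
  by_cases h : i + a < s.length
  · have h1 := ha i h
    have h2 := hp (i + (a - p)) (by omega)
    rw [h1, show i + a = i + (a - p) + p by omega] at *
    exact h2.symm ▸ h1.symm ▸ rfl
  · have h1 := hp (i - p) (by omega)
    have h2 := ha (i - p) (by omega)
    rw [show i - p + p = i by omega] at h1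
    rw [show i - p + a = i + (a - p) by omega] at h2
    rw [← h1, h2]

lemma fw {α : Type*} (s : List α) : ∀ N p a, p + a ≤ N → hasPeriod s p → hasPeriod s a →
    p + a ≤ s.length → hasPeriod s (Nat.gcd p a) := by
  intro N
  induction N with
  | zero =>
    intro p a hN hp ha _
    have : p = 0 ∧ a = 0 := by omega
    obtain ⟨rfl, rfl⟩ := this
    simpa using hp
  | succ n IH =>
    intro p a hN hp ha hlen
    rcases Nat.eq_zero_or_pos p with rfl | hp0
    · simpa using ha
    rcases Nat.eq_zero_or_pos a with rfl | ha0
    · simpa using hp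
    rcases le_total p a with h | h
    · rw [← Nat.gcd_sub_self_right h]
      exact IH p (a - p) (by omega) hp (hasPeriod_sub s hp ha h hlen) (by omega)
    · rw [Nat.gcd_comm, ← Nat.gcd_sub_self_right h, Nat.gcd_comm]
      exact IH (p - a) a (by omega) (hasPeriod_sub s ha hp h (by omega)) ha (by omega)

/-- Any periodicity `a` of `s` with `a ≤ |s|/2` is an integer multiple of `period(s)`. -/
theorem period_dvd_of_periodicity {α : Type*} (s : List α) (a : ℕ)
    (ha : hasPeriod s a) (hlen : 2 * a ≤ s.length) :
    periodN s ∣ a := by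
  rcases Nat.eq_zero_or_pos a with rfl | ha0
  · exact dvd_zero _
  have hmem : a ∈ {p | 0 < p ∧ hasPeriod s p} := ⟨ha0, ha⟩
  have hpmem := Nat.sInf_mem ⟨a, hmem⟩
  obtain ⟨hp0, hp⟩ := hpmem
  set p := periodN s with hpdef
  have hpa : p ≤ a := Nat.sInf_le hmem
  have hg : hasPeriod s (Nat.gcd p a) :=
    fw s (p + a) p a le_rfl hp ha (by omega)
  have hg0 : 0 < Nat.gcd p a := Nat.gcd_pos_of_pos_left a hp0
  have h1 : p ≤ Nat.gcd p a := Nat.sInf_le ⟨hg0, hg⟩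
  have h2 : Nat.gcd p a ≤ p := Nat.gcd_le_left a hp0
  have : Nat.gcd p a = p := le_antisymm h2 h1
  exact this ▸ Nat.gcd_dvd_right p a
end

section
/- Monge inequality for overlaps: Let u, v, u', v' be strings, e = (u,v), f = (v',v), f' = (u,u'), e' = (v',u'). If max{|ov(e)|, |ov(e')|} ≥ max{|ov(f)|, |ov(f')|}, then |ov(e)| + |ov(e')| − |ov(f)| − |ov(f')| ≥ 0. -/
/-- `ovLen s t` is the length of `ov(s,t)`, the longest string that is both a suffix of `s`
and a prefix of `t`. -/
def ovLen {α : Type*} [DecidableEq α] (s t : List α) : ℕ :=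
  Nat.findGreatest (fun k => k ≤ t.length ∧ s.drop (s.length - k) = t.take k) s.length

lemma ovLen_le_left {α : Type*} [DecidableEq α] (s t : List α) : ovLen s t ≤ s.length :=
  Nat.findGreatest_le _

lemma ovLen_spec {α : Type*} [DecidableEq α] (s t : List α) :
    ovLen s t ≤ t.length ∧ s.drop (s.length - ovLen s t) = t.take (ovLen s t) :=
  Nat.findGreatest_spec (P := fun k => k ≤ t.length ∧ s.drop (s.length - k) = t.take k)
    (Nat.zero_le _) ⟨Nat.zero_le _, by simp⟩

lemma le_ovLen {α : Type*} [DecidableEq α] {s t : List α} {k : ℕ} (hk : k ≤ s.length)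
    (ht : k ≤ t.length) (h : s.drop (s.length - k) = t.take k) : k ≤ ovLen s t :=
  Nat.le_findGreatest hk ⟨ht, h⟩

lemma ovLen_rev {α : Type*} [DecidableEq α] (s t : List α) :
    ovLen s t = ovLen t.reverse s.reverse := by
  have key : ∀ (s t : List α) (k : ℕ), k ≤ s.length → k ≤ t.length →
      s.drop (s.length - k) = t.take k →
      t.reverse.drop (t.reverse.length - k) = s.reverse.take k := by
    intro s t k hs ht h
    rw [List.take_reverse, List.drop_reverse, List.length_reverse]
    have hk : t.length - (t.length - k) = k := by omega
    rw [hk]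
    exact congrArg List.reverse h.symm
  apply le_antisymm
  · obtain ⟨ht, h⟩ := ovLen_spec s t
    exact le_ovLen (by simpa using ht) (by simpa using ovLen_le_left s t)
      (key s t _ (ovLen_le_left s t) ht h)
  · obtain ⟨ht, h⟩ := ovLen_spec t.reverse s.reverse
    have := key t.reverse s.reverse _ (ovLen_le_left _ _) ht h
    simp only [List.reverse_reverse, List.length_reverse] at this ht ⊢
    exact le_ovLen ht (by simpa using ovLen_le_left t.reverse s.reverse) this

/-- Core case of Monge: if `ovLen u v` dominates `ovLen v' v` and `ovLen u u'`, then
`ovLen v' v + ovLen u u' - ovLen u v ≤ ovLen v' u'`. -/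
lemma monge_core {α : Type*} [DecidableEq α] (u v u' v' : List α)
    (hc : ovLen v' v ≤ ovLen u v) (hd : ovLen u u' ≤ ovLen u v) :
    ovLen v' v + ovLen u u' ≤ ovLen u v + ovLen v' u' := by
  set a := ovLen u v with ha
  set c := ovLen v' v with hcdef
  set d := ovLen u u' with hddef
  rcases le_or_gt (c + d) a with h | h
  · exact h.trans (Nat.le_add_right _ _)
  · set k := c + d - a with hk
    suffices hsuff : k ≤ ovLen v' u' by omega
    obtain ⟨hcv, hceq⟩ := ovLen_spec v' v
    obtain ⟨hdu', hdeq⟩ := ovLen_spec u u'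
    obtain ⟨hav, haeq⟩ := ovLen_spec u v
    have hcv' : c ≤ v'.length := ovLen_le_left v' v
    have hau : a ≤ u.length := ovLen_le_left u v
    have hdu : d ≤ u.length := ovLen_le_left u u'
    apply le_ovLen (by omega) (by omega)
    -- LHS: v'.drop (v'.length - k) = (v.drop (c - k)).take k
    have lhs : v'.drop (v'.length - k) = (v.drop (c - k)).take k := by
      have : v'.drop (v'.length - k) = (v'.drop (v'.length - c)).drop (c - k) := by
        rw [List.drop_drop]
        congr 1
        omega
      rw [this, hceq, List.drop_take]
      congr 1
      omega
    have rhs : u'.take k = (v.drop (c - k)).take k := by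
      have h1 : u'.take k = (u'.take d).take k := by
        rw [List.take_take]
        congr 1
        omega
      have h2 : u.drop (u.length - d) = (u.drop (u.length - a)).drop (a - d) := by
        rw [List.drop_drop]
        congr 1
        omega
      rw [h1, ← hdeq, h2, haeq, List.drop_take, List.take_take]
      congr 2
      · omega
      · omega
    rw [lhs, rhs]

/-- Monge inequality for overlaps: for `e = (u,v)`, `f = (v',v)`, `f' = (u,u')`,
`e' = (v',u')`, if `max{|ov(e)|, |ov(e')|} ≥ max{|ov(f)|, |ov(f')|}`,
then `|ov(e)| + |ov(e')| − |ov(f)| − |ov(f')| ≥ 0`. -/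
theorem monge_overlap {α : Type*} [DecidableEq α] (u v u' v' : List α)
    (hmax : max (ovLen v' v) (ovLen u u') ≤ max (ovLen u v) (ovLen v' u')) :
    ovLen v' v + ovLen u u' ≤ ovLen u v + ovLen v' u' := by
  rcases le_total (ovLen v' u') (ovLen u v) with hba | hab
  · have hc : ovLen v' v ≤ ovLen u v := le_trans (le_max_left _ _) (by simpa [hba] using hmax)
    have hd : ovLen u u' ≤ ovLen u v := le_trans (le_max_right _ _) (by simpa [hba] using hmax)
    exact monge_core u v u' v' hc hd
  · have hc : ovLen v' v ≤ ovLen v' u' := le_trans (le_max_left _ _) (by simpa [hab] using hmax)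
    have hd : ovLen u u' ≤ ovLen v' u' := le_trans (le_max_right _ _) (by simpa [hab] using hmax)
    -- reverse everything: apply monge_core to (u'.reverse, v'.reverse, u.reverse, v.reverse)
    have := monge_core u'.reverse v'.reverse u.reverse v.reverse
      (by rw [← ovLen_rev, ← ovLen_rev]; exact hc)
      (by rw [← ovLen_rev, ← ovLen_rev]; exact hd)
    simp only [← ovLen_rev] at this
    omega
end
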